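/- Let k be an odd positive integer and let k = r_1 + r_2 + ... + r_t where r_i ≥ 2 for every i with 1 ≤ i ≤ t. Then the set {1, 2, ..., k} can be partitioned into pairwise disjoint subsets D_1, D_2, ..., D_t whose union is {1, ..., k}, such that for every i with 1 ≤ i ≤ t, |D_i| = r_i and the sum of the elements of D_i is congruent to 0 modulo k. -/

import Mathlib

/-!
Write `k = 2m + 1`. Each part of odd size `r` is one zero-sum triple plus `(r - 3) / 2`
complementary pairs `{x, k - x}`, each part of even size is `r / 2` such pairs. If `q` parts
are odd, then `q` is odd, say `q = 2s + 1`, and `2s + 1` disjoint zero-sum triples can be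
carved out of `[1, 3s] ∪ [k - 3s, k - 1] ∪ {m, m + 1, k}`; the remaining elements of `[1, k]`
are exactly the pairs `{x, k - x}` with `3s < x < m`, and there are just enough of them.
The parts take the triples in order and consecutive blocks of these pairs.
-/

open Finset

namespace ZeroSumPartition

def prefixSum (f : ℕ → ℕ) (i : ℕ) : ℕ := ∑ j ∈ Icc 1 i, f j

section PrefixSum

variable {f : ℕ → ℕ} {i j : ℕ}

lemma prefixSum_succ (f : ℕ → ℕ) (i : ℕ) :
    prefixSum f (i + 1) = prefixSum f i + f (i + 1) :=
  sum_Icc_succ_top (by omega) f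

lemma prefixSum_mono (f : ℕ → ℕ) : Monotone (prefixSum f) :=
  fun _ _ h => sum_le_sum_of_subset (Icc_subset_Icc_right h)

lemma prefixSum_pred_add (hi : 1 ≤ i) : prefixSum f (i - 1) + f i = prefixSum f i := by
  obtain ⟨i, rfl⟩ := Nat.exists_eq_add_of_le' hi
  simp [prefixSum_succ]

lemma prefixSum_add_le (hij : i < j) : prefixSum f i + f j ≤ prefixSum f j := by
  rw [← prefixSum_pred_add (by omega : 1 ≤ j)]
  exact Nat.add_le_add_right (prefixSum_mono f (by omega)) _

end PrefixSum

def pairCount (n : ℕ) : ℕ := n / 2 - n % 2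

lemma two_mul_pairCount_add {n : ℕ} (hn : 2 ≤ n) : 2 * pairCount n + 3 * (n % 2) = n := by
  unfold pairCount; omega

lemma two_mul_prefixSum_pairCount_add {r : ℕ → ℕ} {t : ℕ}
    (hr : ∀ i ∈ Icc 1 t, 2 ≤ r i) :
    2 * prefixSum (fun i => pairCount (r i)) t + 3 * prefixSum (fun i => r i % 2) t =
      ∑ i ∈ Icc 1 t, r i := by
  rw [prefixSum, prefixSum, mul_sum, mul_sum, ← sum_add_distrib]
  exact sum_congr rfl fun i hi => two_mul_pairCount_add (hr i hi)

section Pairs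

variable {k : ℕ} {I J : Finset ℕ}

def pairs (k : ℕ) (I : Finset ℕ) : Finset ℕ := I.biUnion fun x => {x, k - x}

lemma mem_pairs {a : ℕ} : a ∈ pairs k I ↔ ∃ x ∈ I, a = x ∨ a = k - x := by
  simp [pairs]

lemma pairwiseDisjoint_pair (hI : ∀ x ∈ I, 2 * x < k) :
    (I : Set ℕ).PairwiseDisjoint fun x => ({x, k - x} : Finset ℕ) := by
  intro x hx y hy hxy
  have := hI x hx
  have := hI y hy
  simp only [Function.onFun, disjoint_insert_left, disjoint_insert_right, mem_insert,
    mem_singleton, disjoint_singleton]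
  omega

lemma card_pairs (hI : ∀ x ∈ I, 2 * x < k) : #(pairs k I) = 2 * #I := by
  rw [pairs, card_biUnion (pairwiseDisjoint_pair hI), sum_congr rfl fun x hx =>
    card_pair (by have := hI x hx; omega), sum_const, smul_eq_mul, mul_comm]

lemma sum_pairs (hI : ∀ x ∈ I, 2 * x < k) : ∑ a ∈ pairs k I, a = k * #I := by
  rw [pairs, sum_biUnion (pairwiseDisjoint_pair hI), sum_congr rfl fun x hx =>
    (sum_pair (by have := hI x hx; omega)).trans (by have := hI x hx; omega : x + (k - x) = k),
    sum_const, smul_eq_mul, mul_comm]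

lemma disjoint_pairs (hIJ : Disjoint I J) (hI : ∀ x ∈ I, 2 * x < k)
    (hJ : ∀ x ∈ J, 2 * x < k) :
    Disjoint (pairs k I) (pairs k J) := by
  rw [disjoint_left]
  rintro a ha ha'
  obtain ⟨x, hx, hax⟩ := mem_pairs.1 ha
  obtain ⟨y, hy, hay⟩ := mem_pairs.1 ha'
  have := hI x hx
  have := hJ y hy
  have hxy : x ≠ y := fun h => disjoint_left.1 hIJ hx (h ▸ hy)
  omega

lemma pairs_subset_Icc (hI : ∀ x ∈ I, 0 < x ∧ 2 * x < k) : pairs k I ⊆ Icc 1 k := by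
  intro a ha
  obtain ⟨x, hx, hax⟩ := mem_pairs.1 ha
  have := hI x hx
  rw [mem_Icc]
  omega

end Pairs

section Triples

variable {k s n n' : ℕ}

/-- For `k = 2m + 1` and `1 ≤ n ≤ 2s + 1` these triples tile
`[1, 3s] ∪ [k - 3s, k - 1] ∪ {m, m + 1, k}`; each has sum `k` (`n` even) or `2k` (`n` odd). -/
def triple (k s n : ℕ) : Finset ℕ :=
  if n = 1 then {k / 2, k / 2 + 1, k}
  else if n % 2 = 0 then {n / 2, s + n / 2, k - s - n}
  else {2 * s + n / 2, k - s - 1 + n / 2, k + 2 - s - n}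

lemma mem_triple {a : ℕ} :
    a ∈ triple k s n ↔
      n = 1 ∧ (a = k / 2 ∨ a = k / 2 + 1 ∨ a = k) ∨
      n ≠ 1 ∧ n % 2 = 0 ∧ (a = n / 2 ∨ a = s + n / 2 ∨ a = k - s - n) ∨
      n ≠ 1 ∧ n % 2 = 1 ∧
        (a = 2 * s + n / 2 ∨ a = k - s - 1 + n / 2 ∨ a = k + 2 - s - n) := by
  unfold triple
  split_ifs <;> simp only [mem_insert, mem_singleton] <;> omega

variable (hk : k % 2 = 1) (hs : 6 * s + 3 ≤ k)
include hk hs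

lemma card_triple (hn : n ∈ Icc 1 (2 * s + 1)) : #(triple k s n) = 3 := by
  rw [mem_Icc] at hn
  unfold triple
  split_ifs <;> exact card_eq_three.2 ⟨_, _, _, by omega, by omega, by omega, rfl⟩

lemma dvd_sum_triple (hn : n ∈ Icc 1 (2 * s + 1)) : k ∣ ∑ a ∈ triple k s n, a := by
  rw [mem_Icc] at hn
  unfold triple
  split_ifs
  · rw [sum_insert (by simp; omega), sum_pair (by omega)]
    exact ⟨2, by omega⟩
  · rw [sum_insert (by simp; omega), sum_pair (by omega)]
    exact ⟨1, by omega⟩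
  · rw [sum_insert (by simp; omega), sum_pair (by omega)]
    exact ⟨2, by omega⟩

lemma triple_subset_Icc (hn : n ∈ Icc 1 (2 * s + 1)) : triple k s n ⊆ Icc 1 k := by
  intro a ha
  rw [mem_Icc] at hn ⊢
  rw [mem_triple] at ha
  omega

lemma disjoint_triple (hn : n ∈ Icc 1 (2 * s + 1)) (hn' : n' ∈ Icc 1 (2 * s + 1))
    (hnn' : n ≠ n') : Disjoint (triple k s n) (triple k s n') := by
  rw [mem_Icc] at hn hn'
  rw [disjoint_left]
  intro a ha ha'
  rw [mem_triple] at ha ha'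
  omega

lemma disjoint_triple_pairs {I : Finset ℕ} (hn : n ∈ Icc 1 (2 * s + 1))
    (hI : I ⊆ Ioo (3 * s) (k / 2)) : Disjoint (triple k s n) (pairs k I) := by
  rw [mem_Icc] at hn
  rw [disjoint_left]
  intro a ha ha'
  obtain ⟨x, hx, hax⟩ := mem_pairs.1 ha'
  have := mem_Ioo.1 (hI hx)
  rw [mem_triple] at ha
  omega

end Triples

section Parts

variable {k s t i j : ℕ} {r : ℕ → ℕ}

def pairIdx (s : ℕ) (r : ℕ → ℕ) (i : ℕ) : Finset ℕ :=
  Ioc (3 * s + prefixSum (fun j => pairCount (r j)) (i - 1))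
    (3 * s + prefixSum (fun j => pairCount (r j)) i)

def oddTriple (k s : ℕ) (r : ℕ → ℕ) (i : ℕ) : Finset ℕ :=
  if r i % 2 = 1 then triple k s (prefixSum (fun j => r j % 2) i) else ∅

def part (k s : ℕ) (r : ℕ → ℕ) (i : ℕ) : Finset ℕ :=
  oddTriple k s r i ∪ pairs k (pairIdx s r i)

lemma card_pairIdx (hi : 1 ≤ i) : #(pairIdx s r i) = pairCount (r i) := by
  rw [pairIdx, Nat.card_Ioc, ← prefixSum_pred_add hi]
  omega

lemma pairIdx_subset_Ioo (hP : 2 * prefixSum (fun j => pairCount (r j)) t + 6 * s + 3 = k)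
    (hi : i ∈ Icc 1 t) : pairIdx s r i ⊆ Ioo (3 * s) (k / 2) := by
  have := prefixSum_mono (fun j => pairCount (r j)) (mem_Icc.1 hi).2
  have := prefixSum_mono (fun j => pairCount (r j)) (Nat.sub_le i 1)
  intro x hx
  rw [pairIdx, mem_Ioc] at hx
  rw [mem_Ioo]
  omega

lemma disjoint_pairIdx (hi : 1 ≤ i) (hj : 1 ≤ j) (hij : i ≠ j) :
    Disjoint (pairIdx s r i) (pairIdx s r j) := by
  wlog hlt : i < j generalizing i j
  · exact (this hj hi hij.symm (by omega)).symm
  exact Ioc_disjoint_Ioc_of_le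
    (Nat.add_le_add_left (prefixSum_mono _ (by omega : i ≤ j - 1)) _)

lemma prefixSum_mod_two_mem_Icc (hq : prefixSum (fun j => r j % 2) t = 2 * s + 1)
    (hi : i ∈ Icc 1 t) (hodd : r i % 2 = 1) :
    prefixSum (fun j => r j % 2) i ∈ Icc 1 (2 * s + 1) := by
  have hpos : r i % 2 ≤ prefixSum (fun j => r j % 2) i :=
    single_le_sum (f := fun j => r j % 2) (fun _ _ => Nat.zero_le _)
      (mem_Icc.2 ⟨(mem_Icc.1 hi).1, le_rfl⟩)
  have := prefixSum_mono (fun j => r j % 2) (mem_Icc.1 hi).2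
  rw [mem_Icc]
  omega

section

variable (hq : prefixSum (fun j => r j % 2) t = 2 * s + 1)
  (hP : 2 * prefixSum (fun j => pairCount (r j)) t + 6 * s + 3 = k)
include hq hP

lemma card_oddTriple (hi : i ∈ Icc 1 t) : #(oddTriple k s r i) = 3 * (r i % 2) := by
  unfold oddTriple
  split_ifs with hodd
  · rw [card_triple (by omega) (by omega) (prefixSum_mod_two_mem_Icc hq hi hodd), hodd]
  · simp; omega

lemma dvd_sum_oddTriple (hi : i ∈ Icc 1 t) : k ∣ ∑ a ∈ oddTriple k s r i, a := by
  unfold oddTriple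
  split_ifs with hodd
  · exact dvd_sum_triple (by omega) (by omega) (prefixSum_mod_two_mem_Icc hq hi hodd)
  · simp

lemma oddTriple_subset_Icc (hi : i ∈ Icc 1 t) : oddTriple k s r i ⊆ Icc 1 k := by
  unfold oddTriple
  split_ifs with hodd
  · exact triple_subset_Icc (by omega) (by omega) (prefixSum_mod_two_mem_Icc hq hi hodd)
  · exact empty_subset _

lemma disjoint_oddTriple_pairs {I : Finset ℕ} (hi : i ∈ Icc 1 t)
    (hI : I ⊆ Ioo (3 * s) (k / 2)) :
    Disjoint (oddTriple k s r i) (pairs k I) := by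
  unfold oddTriple
  split_ifs with hodd
  · exact disjoint_triple_pairs (by omega) (by omega) (prefixSum_mod_two_mem_Icc hq hi hodd) hI
  · exact disjoint_empty_left _

lemma disjoint_oddTriple (hi : i ∈ Icc 1 t) (hj : j ∈ Icc 1 t) (hij : i ≠ j) :
    Disjoint (oddTriple k s r i) (oddTriple k s r j) := by
  wlog hlt : i < j generalizing i j
  · exact (this hj hi hij.symm (by omega)).symm
  unfold oddTriple
  split_ifs with hi_odd hj_odd
  · refine disjoint_triple (by omega) (by omega) (prefixSum_mod_two_mem_Icc hq hi hi_odd)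
      (prefixSum_mod_two_mem_Icc hq hj hj_odd) (Nat.ne_of_lt ?_)
    have := prefixSum_add_le (f := fun j => r j % 2) hlt
    omega
  all_goals simp

lemma card_part (hi : i ∈ Icc 1 t) :
    #(part k s r i) = 2 * pairCount (r i) + 3 * (r i % 2) := by
  rw [part, card_union_of_disjoint (disjoint_oddTriple_pairs hq hP hi (pairIdx_subset_Ioo hP hi)),
    card_oddTriple hq hP hi, card_pairs fun x hx => ?_, card_pairIdx (mem_Icc.1 hi).1]
  · ring
  · have := mem_Ioo.1 (pairIdx_subset_Ioo hP hi hx)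
    omega

lemma dvd_sum_part (hi : i ∈ Icc 1 t) : k ∣ ∑ a ∈ part k s r i, a := by
  rw [part, sum_union (disjoint_oddTriple_pairs hq hP hi (pairIdx_subset_Ioo hP hi)),
    sum_pairs fun x hx => ?_]
  · exact dvd_add (dvd_sum_oddTriple hq hP hi) (dvd_mul_right _ _)
  · have := mem_Ioo.1 (pairIdx_subset_Ioo hP hi hx)
    omega

lemma part_subset_Icc (hi : i ∈ Icc 1 t) : part k s r i ⊆ Icc 1 k :=
  union_subset (oddTriple_subset_Icc hq hP hi) <| pairs_subset_Icc fun x hx => by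
    have := mem_Ioo.1 (pairIdx_subset_Ioo hP hi hx)
    omega

lemma disjoint_part (hi : i ∈ Icc 1 t) (hj : j ∈ Icc 1 t) (hij : i ≠ j) :
    Disjoint (part k s r i) (part k s r j) := by
  have hIi := pairIdx_subset_Ioo hP hi
  have hIj := pairIdx_subset_Ioo hP hj
  simp only [part, disjoint_union_left, disjoint_union_right]
  refine ⟨⟨disjoint_oddTriple hq hP hi hj hij, (disjoint_oddTriple_pairs hq hP hj hIi).symm⟩,
    disjoint_oddTriple_pairs hq hP hi hIj, disjoint_pairs
      (disjoint_pairIdx (mem_Icc.1 hi).1 (mem_Icc.1 hj).1 hij) (fun x hx => ?_) fun x hx => ?_⟩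
  · have := mem_Ioo.1 (hIi hx); omega
  · have := mem_Ioo.1 (hIj hx); omega

end

end Parts

end ZeroSumPartition

open ZeroSumPartition

theorem zero_sum_partition_sizes_odd_general (k t : ℕ) (hko : Odd k)
    (r : ℕ → ℕ) (hr : ∀ i ∈ Finset.Icc 1 t, 2 ≤ r i)
    (hsum : k = ∑ i ∈ Finset.Icc 1 t, r i) :
    ∃ D : ℕ → Finset ℕ,
      (∀ i ∈ Finset.Icc 1 t, ∀ j ∈ Finset.Icc 1 t, i ≠ j → Disjoint (D i) (D j)) ∧
      ((Finset.Icc 1 t).biUnion D = Finset.Icc 1 k) ∧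
      (∀ i ∈ Finset.Icc 1 t, (D i).card = r i ∧ (∑ a ∈ D i, a) % k = 0) := by
  have hcount := two_mul_prefixSum_pairCount_add hr
  have hk := Nat.odd_iff.1 hko
  set s := prefixSum (fun i => r i % 2) t / 2
  have hq : prefixSum (fun i => r i % 2) t = 2 * s + 1 := by omega
  have hP : 2 * prefixSum (fun i => pairCount (r i)) t + 6 * s + 3 = k := by omega
  have hcard i (hi : i ∈ Icc 1 t) : #(part k s r i) = r i :=
    (card_part hq hP hi).trans (two_mul_pairCount_add (hr i hi))
  have hdisj i (hi : i ∈ Icc 1 t) j (hj : j ∈ Icc 1 t) (hij : i ≠ j) :=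
    disjoint_part hq hP hi hj hij
  refine ⟨part k s r, hdisj, ?_, fun i hi =>
    ⟨hcard i hi, Nat.mod_eq_zero_of_dvd (dvd_sum_part hq hP hi)⟩⟩
  refine eq_of_subset_of_card_le (biUnion_subset.2 fun i hi => part_subset_Icc hq hP hi) ?_
  rw [card_biUnion hdisj, sum_congr rfl hcard, ← hsum, Nat.card_Icc]
  omega

/-- **Zero-sum partition, odd case.**
Let `k` be an odd positive integer written as `k = r 1 + r 2 + ⋯ + r t` with every
`r i ≥ 2`. Then `{1, …, k}` can be partitioned into pairwise disjoint subsets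
`D 1, …, D t` with `|D i| = r i` whose element sums are all `≡ 0 (mod k)`. -/
theorem zero_sum_partition_sizes_odd (k t : ℕ) (hk : 0 < k) (hko : Odd k)
    (r : ℕ → ℕ) (hr : ∀ i ∈ Finset.Icc 1 t, 2 ≤ r i)
    (hsum : k = ∑ i ∈ Finset.Icc 1 t, r i) :
    ∃ D : ℕ → Finset ℕ,
      (∀ i ∈ Finset.Icc 1 t, ∀ j ∈ Finset.Icc 1 t, i ≠ j → Disjoint (D i) (D j)) ∧
      ((Finset.Icc 1 t).biUnion D = Finset.Icc 1 k) ∧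
      (∀ i ∈ Finset.Icc 1 t, (D i).card = r i ∧ (∑ a ∈ D i, a) % k = 0) :=
  zero_sum_partition_sizes_odd_general k t hko r hr hsum
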